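/- arXiv:1411.0782 — 5 statements merged into one kernel-verified Lean document; each statement's English description precedes it below -/
import Mathlib

section
/- Every formal pathway of a CRN can be generated by interleaving one or more prime formal pathways of that CRN. -/
namespace CRNVerif

variable {σ : Type} [DecidableEq σ]

/-- A state is a multiset of species. -/
abbrev State (σ : Type) := Multiset σ
/-- A reaction is a pair (reactants, products) of multisets of species. -/
abbrev Reaction (σ : Type) := Multiset σ × Multiset σ
/-- A pathway is a finite sequence of reactions. -/
abbrev Pathway (σ : Type) := List (Reaction σ)

/-- Result of applying reaction `r` in state `S` (i.e. `S ⊕ r`). -/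
def applyRxn (S : State σ) (r : Reaction σ) : State σ := S - r.1 + r.2

/-- Minimal initial state of a pathway: the smallest state in which
its reactions can occur in succession. -/
def minInit : Pathway σ → State σ
  | [] => 0
  | r :: p => r.1 + (minInit p - r.2)

/-- State reached from `S` after performing all reactions of `p` in order. -/
def finalFrom (S : State σ) : Pathway σ → State σ
  | [] => S
  | r :: p => finalFrom (applyRxn S r) p

/-- The final state of a pathway (starting from its minimal initial state). -/
def finalState (p : Pathway σ) : State σ := finalFrom (minInit p) p

/-- The state `S_i` after the first `i` reactions, starting from the minimal initial state. -/
def stateAt (p : Pathway σ) (i : ℕ) : State σ := finalFrom (minInit p) (p.take i)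

/-- A state is formal if it contains only formal species (as given by `fm`). -/
def FormalState (fm : σ → Bool) (S : State σ) : Prop := ∀ x ∈ S, fm x = true

/-- `Formal(S)`: the multiset obtained by removing all intermediate species from `S`. -/
def formalPart (fm : σ → Bool) (S : State σ) : State σ := S.filter (fun x => fm x = true)

/-- A reaction is trivial if reactants equal products. -/
def TrivialRxn (r : Reaction σ) : Prop := r.1 = r.2

/-- A CRN is a (finite) set of nontrivial reactions. -/
def NontrivialRxns (C : Finset (Reaction σ)) : Prop := ∀ r ∈ C, ¬ TrivialRxn r

/-- A formal CRN contains only formal reactions. -/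
def IsFormalCRN (fm : σ → Bool) (C : Finset (Reaction σ)) : Prop :=
  ∀ r ∈ C, FormalState fm r.1 ∧ FormalState fm r.2

/-- `p` is a pathway of the CRN `C`. -/
def PathwayOf (C : Finset (Reaction σ)) (p : Pathway σ) : Prop := ∀ r ∈ p, r ∈ C

/-- `Interleave l₁ l₂ l`: `l` can be partitioned into the two (order-preserving,
not necessarily contiguous) subsequences `l₁` and `l₂`. -/
inductive Interleave {α : Type u} : List α → List α → List α → Prop
  | nil : Interleave [] [] []
  | left {a : α} {l₁ l₂ l : List α} : Interleave l₁ l₂ l → Interleave (a :: l₁) l₂ (a :: l)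
  | right {a : α} {l₁ l₂ l : List α} : Interleave l₁ l₂ l → Interleave l₁ (a :: l₂) (a :: l)

/-- `InterleaveMany qs p`: `p` is generated by interleaving the lists in `qs`. -/
inductive InterleaveMany {α : Type u} : List (List α) → List α → Prop
  | nil : InterleaveMany [] []
  | cons {q r p : List α} {qs : List (List α)} :
      Interleave q r p → InterleaveMany qs r → InterleaveMany (q :: qs) p

/-- A pathway is semiformal if its minimal initial state is formal. -/
def Semiformal (fm : σ → Bool) (p : Pathway σ) : Prop := FormalState fm (minInit p)

/-- A formal pathway: a (nonempty) pathway whose minimal initial state and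
final state are both formal. -/
def FormalPathway (fm : σ → Bool) (p : Pathway σ) : Prop :=
  p ≠ [] ∧ FormalState fm (minInit p) ∧ FormalState fm (finalState p)

/-- A formal pathway is decomposable if it can be partitioned into two nonempty
subsequences that are each formal pathways. -/
def FDecomposable (fm : σ → Bool) (p : Pathway σ) : Prop :=
  ∃ q₁ q₂, q₁ ≠ [] ∧ q₂ ≠ [] ∧ Interleave q₁ q₂ p ∧
    FormalPathway fm q₁ ∧ FormalPathway fm q₂

/-- A prime formal pathway is a formal pathway that is not decomposable. -/
def PrimePathway (fm : σ → Bool) (p : Pathway σ) : Prop :=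
  FormalPathway fm p ∧ ¬ FDecomposable fm p

/-- The formal basis: the set of (initial state, final state) pairs of prime
formal pathways of `C`. -/
def formalBasis (fm : σ → Bool) (C : Finset (Reaction σ)) : Set (Reaction σ) :=
  { r | ∃ p, PathwayOf C p ∧ PrimePathway fm p ∧ r = (minInit p, finalState p) }

/-- Two sets of reactions are equal up to addition/removal of trivial reactions. -/
def EqUpToTrivial (A B : Set (Reaction σ)) : Prop :=
  {r ∈ A | ¬ TrivialRxn r} = {r ∈ B | ¬ TrivialRxn r}

/-- The reaction at (0-based) index `j` of `p` is a turning point: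
before it only formal species of the initial state appear, from it on only formal
species of the final state appear, and at the moment the turning point fires,
no formal species are left over. -/
def TurningAt (fm : σ → Bool) (p : Pathway σ) (j : ℕ) : Prop :=
  ∃ h : j < p.length,
    (∀ i ≤ j, formalPart fm (stateAt p i) ≤ minInit p) ∧
    (∀ i, j < i → i ≤ p.length → formalPart fm (stateAt p i) ≤ finalState p) ∧
    formalPart fm (stateAt p j - (p.get ⟨j, h⟩).1) = 0

/-- A regular formal pathway: one that implements a formal reaction,
i.e. has a turning point. -/
def RegularPathway (fm : σ → Bool) (p : Pathway σ) : Prop :=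
  FormalPathway fm p ∧ ∃ j, TurningAt fm p j

/-- A CRN is regular if every prime formal pathway is regular. -/
def RegularCRN (fm : σ → Bool) (C : Finset (Reaction σ)) : Prop :=
  ∀ p, PathwayOf C p → PrimePathway fm p → RegularPathway fm p

/-- `q` is a strong closing pathway for `p` (within CRN `C`): it can occur in the
final state of `p`, consumes no formal species, and leads back to a formal state. -/
def ClosingPathway (fm : σ → Bool) (C : Finset (Reaction σ)) (p q : Pathway σ) : Prop :=
  PathwayOf C q ∧ minInit q ≤ finalState p ∧ (∀ r ∈ q, formalPart fm r.1 = 0) ∧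
  FormalState fm (finalFrom (finalState p) q)

/-- A CRN is strongly tidy if every semiformal pathway has a strong closing pathway. -/
def StronglyTidy (fm : σ → Bool) (C : Finset (Reaction σ)) : Prop :=
  ∀ p, PathwayOf C p → Semiformal fm p → ∃ q, ClosingPathway fm C p q

/-- A semiformal pathway is decomposable if it can be partitioned into two
nonempty subsequences that are each semiformal. -/
def SDecomposable (fm : σ → Bool) (p : Pathway σ) : Prop :=
  ∃ q₁ q₂, q₁ ≠ [] ∧ q₂ ≠ [] ∧ Interleave q₁ q₂ p ∧ Semiformal fm q₁ ∧ Semiformal fm q₂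

/-- The width of a pathway: the maximum size of the states it passes through. -/
def width (p : Pathway σ) : ℕ :=
  ((List.range (p.length + 1)).map (fun i => Multiset.card (stateAt p i))).foldr max 0

/-- The branching factor of a CRN. -/
def branching (C : Finset (Reaction σ)) : ℕ :=
  C.sup (fun r => max (Multiset.card r.1) (Multiset.card r.2))

/-- Formal state `T` is reachable from `S` via reactions of `C`. -/
def Reachable (C : Finset (Reaction σ)) (S T : State σ) : Prop :=
  ∃ p, PathwayOf C p ∧ minInit p ≤ S ∧ finalFrom S p = T

/-- `C` and `C'` share no intermediate species: any species occurring in both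
CRNs is formal. -/
def NoSharedIntermediates (fm : σ → Bool) (C C' : Finset (Reaction σ)) : Prop :=
  ∀ r ∈ C, ∀ r' ∈ C', ∀ x : σ, x ∈ r.1 + r.2 → x ∈ r'.1 + r'.2 → fm x = true

/-- The formal closure of a pathway: the minimal state containing the formal part
of every state along the pathway. -/
def formalClosure (fm : σ → Bool) (p : Pathway σ) : State σ :=
  ((List.range (p.length + 1)).map (fun i => formalPart fm (stateAt p i))).foldr (· ∪ ·) 0

/-- The decomposed final states of a semiformal pathway: all pairs of final
states arising from decompositions into two (nonempty) semiformal pathways. -/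
def DFS (fm : σ → Bool) (p : Pathway σ) : Set (State σ × State σ) :=
  { T | ∃ q₁ q₂, q₁ ≠ [] ∧ q₂ ≠ [] ∧ Interleave q₁ q₂ p ∧
        Semiformal fm q₁ ∧ Semiformal fm q₂ ∧ T = (finalState q₁, finalState q₂) }

/-- The minimal state containing the formal parts of all states strictly after index `j`. -/
def rfsAt (fm : σ → Bool) (p : Pathway σ) (j : ℕ) : State σ :=
  (((List.range (p.length + 1)).filter (fun i => j < i)).map
      (fun i => formalPart fm (stateAt p i))).foldr (· ∪ ·) 0

/-- The regular final states of a pathway: the minimal states `T` witnessed by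
potential turning point reactions. -/
def RFS (fm : σ → Bool) (p : Pathway σ) : Set (State σ) :=
  { T | ∃ j, ∃ h : j < p.length,
      (∀ i ≤ j, formalPart fm (stateAt p i) ≤ minInit p) ∧
      formalPart fm (stateAt p j - (p.get ⟨j, h⟩).1) = 0 ∧
      T = rfsAt fm p j }

/-- The signature of a semiformal pathway: (initial state, final state, width,
formal closure, DFS, RFS). -/
def signature (fm : σ → Bool) (p : Pathway σ) :
    State σ × State σ × ℕ × State σ × Set (State σ × State σ) × Set (State σ) :=
  (minInit p, finalState p, width p, formalClosure fm p, DFS fm p, RFS fm p)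

/-- An annotated prime pathway: exactly its chosen turning point is annotated,
with the corresponding formal basis reaction. -/
def GoodAnnotation (fm : σ → Bool) (ap : List (Reaction σ × Option (Reaction σ))) : Prop :=
  PrimePathway fm (ap.map Prod.fst) ∧
  ∃ j, TurningAt fm (ap.map Prod.fst) j ∧
    ap.map Prod.snd = (List.range ap.length).map
      (fun i => if i = j then
          some (minInit (ap.map Prod.fst), finalState (ap.map Prod.fst)) else none)

/-- `p` can be interpreted as `q`: `q` can occur in the initial state of `p`, has
the same net effect, and there is a decomposition of `p` into prime formal pathways
such that replacing a chosen turning point of each by the corresponding formal basis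
element and removing all other reactions yields `q`. -/
def Interpreted (fm : σ → Bool) (p q : Pathway σ) : Prop :=
  minInit q ≤ minInit p ∧
  finalFrom (minInit p) q = finalState p ∧
  ∃ ap : List (Reaction σ × Option (Reaction σ)),
    ap.map Prod.fst = p ∧ (ap.map Prod.snd).reduceOption = q ∧
    ∃ aps, InterleaveMany aps ap ∧ ∀ a ∈ aps, GoodAnnotation fm a


lemma interleave_self {α : Type u} (l : List α) : Interleave l [] l := by
  induction l with
  | nil => exact .nil
  | cons a l ih => exact .left ih

lemma interleave_sublists {α : Type u} {l₁ l₂ l : List α} (h : Interleave l₁ l₂ l) :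
    l₁.Sublist l ∧ l₂.Sublist l := by
  induction h with
  | nil => exact ⟨List.Sublist.refl _, List.Sublist.refl _⟩
  | left _ ih => exact ⟨ih.1.cons₂ _, ih.2.cons _⟩
  | right _ ih => exact ⟨ih.1.cons _, ih.2.cons₂ _⟩

lemma interleave_length {α : Type u} {l₁ l₂ l : List α} (h : Interleave l₁ l₂ l) :
    l₁.length + l₂.length = l.length := by
  induction h with
  | nil => rfl
  | left _ ih => simp [← ih]; omega
  | right _ ih => simp [← ih]; omega

lemma interleave_nil_left {α : Type u} {l₂ l : List α} (h : Interleave [] l₂ l) :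
    l = l₂ := by
  generalize hn : ([] : List α) = e at h
  induction h with
  | nil => rfl
  | left _ _ => simp at hn
  | right _ ih => simp_all

lemma interleave_assoc {α : Type u} {a r q c p : List α}
    (h2 : Interleave q c p) (h1 : Interleave a r q) :
    ∃ s, Interleave r c s ∧ Interleave a s p := by
  induction h2 generalizing a r with
  | nil =>
    cases h1
    exact ⟨[], .nil, .nil⟩
  | @left x l₁ c l _ ih =>
    cases h1 with
    | left h1' =>
      obtain ⟨s, hs1, hs2⟩ := ih h1'
      exact ⟨s, hs1, hs2.left⟩
    | right h1' =>
      obtain ⟨s, hs1, hs2⟩ := ih h1'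
      exact ⟨x :: s, hs1.left, hs2.right⟩
  | @right x l₁ c l _ ih =>
    obtain ⟨s, hs1, hs2⟩ := ih h1
    exact ⟨x :: s, hs1.right, hs2.right⟩

lemma interleaveMany_append {α : Type u} {qs₁ qs₂ : List (List α)} {q₁ q₂ p : List α}
    (h1 : InterleaveMany qs₁ q₁) (h2 : InterleaveMany qs₂ q₂)
    (h : Interleave q₁ q₂ p) : InterleaveMany (qs₁ ++ qs₂) p := by
  induction h1 generalizing p with
  | nil =>
    cases interleave_nil_left h
    simpa using h2
  | @cons a r q₁' qs hi _ ih =>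
    obtain ⟨s, hs1, hs2⟩ := interleave_assoc h hi
    exact .cons hs2 (ih hs1)

/-- Every formal pathway of a CRN can be generated by interleaving one or more
prime formal pathways of that CRN. -/
theorem formal_pathway_interleaving_of_primes {σ : Type} [DecidableEq σ] (fm : σ → Bool)
    (C : Finset (Reaction σ)) (hC : NontrivialRxns C)
    (p : Pathway σ) (hp : PathwayOf C p) (hf : FormalPathway fm p) :
    ∃ qs : List (Pathway σ), qs ≠ [] ∧
      (∀ q ∈ qs, PathwayOf C q ∧ PrimePathway fm q) ∧ InterleaveMany qs p := by
  suffices h : ∀ n q, PathwayOf C q → FormalPathway fm q → q.length = n →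
      ∃ qs : List (Pathway σ), qs ≠ [] ∧
        (∀ q' ∈ qs, PathwayOf C q' ∧ PrimePathway fm q') ∧ InterleaveMany qs q by
    exact h p.length p hp hf rfl
  clear hp hf p
  intro n
  induction n using Nat.strong_induction_on with
  | _ n ih =>
  intro p hp hf hn
  subst hn
  by_cases hdec : FDecomposable fm p
  · obtain ⟨q₁, q₂, hq₁, hq₂, hint, hf₁, hf₂⟩ := hdec
    have hlen := interleave_length hint
    have hsub := interleave_sublists hint
    have hl₁ : q₁.length < p.length := by
      have : 0 < q₂.length := List.length_pos_iff.mpr hq₂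
      omega
    have hl₂ : q₂.length < p.length := by
      have : 0 < q₁.length := List.length_pos_iff.mpr hq₁
      omega
    obtain ⟨qs₁, -, hqs₁, hm₁⟩ :=
      ih q₁.length hl₁ q₁ (fun r hr => hp r (hsub.1.mem hr)) hf₁ rfl
    obtain ⟨qs₂, -, hqs₂, hm₂⟩ :=
      ih q₂.length hl₂ q₂ (fun r hr => hp r (hsub.2.mem hr)) hf₂ rfl
    refine ⟨qs₁ ++ qs₂, ?_, ?_, interleaveMany_append hm₁ hm₂ hint⟩
    · have : qs₁ ≠ [] := by rintro rfl; cases hm₁; exact hq₁ rfl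
      simp [this]
    · intro q hq
      rcases List.mem_append.mp hq with h | h
      exacts [hqs₁ q h, hqs₂ q h]
  · refine ⟨[p], by simp, ?_, ?_⟩
    · intro q hq; simp at hq; subst hq; exact ⟨hp, hf, hdec⟩
    · exact .cons (interleave_self p) .nil


end CRNVerif
end

section
/- Let p be a pathway obtained by interleaving pathways p_1,...,p_l with minimal initial states S_1,...,S_l respectively, and let S be the minimal initial state of p. Then S is a sub-multiset of the multiset sum S_1 + S_2 + ... + S_l. -/
namespace CRNVerif

variable {σ : Type} [DecidableEq σ]

/-
Since `minInit (r :: p) = r.1 + (minInit p - r.2)` and truncated subtraction satisfies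
`(X + Y) - c ≤ (X - c) + Y`, the products of the first reaction of an interleaving may be
charged entirely to the pathway that reaction belongs to. Induction on the interleaving makes
`minInit` subadditive over two interleaved pathways, and induction on the list extends this
to any number of them.
-/

theorem minInit_cons_le_add {a : Reaction σ} {l : Pathway σ} {X Y : State σ}
    (h : minInit l ≤ X + Y) : minInit (a :: l) ≤ a.1 + (X - a.2) + Y :=
  calc a.1 + (minInit l - a.2) ≤ a.1 + (X + Y - a.2) := by gcongr
    _ ≤ a.1 + (X - a.2 + Y) := add_le_add_right add_tsub_le_tsub_add _
    _ = a.1 + (X - a.2) + Y := (add_assoc _ _ _).symm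

theorem minInit_le_add_of_interleave {q r p : Pathway σ} (h : Interleave q r p) :
    minInit p ≤ minInit q + minInit r := by
  induction h with
  | nil => simp [minInit]
  | left _ ih => exact minInit_cons_le_add ih
  | right _ ih =>
    rw [add_comm] at ih ⊢
    exact minInit_cons_le_add ih

/-- If `p` is obtained by interleaving `p₁, ..., p_l`, then the minimal initial
state of `p` is contained in the multiset sum of their minimal initial states. -/
theorem minInit_le_sum_of_interleaveMany {σ : Type} [DecidableEq σ]
    (ps : List (Pathway σ)) (p : Pathway σ) (h : InterleaveMany ps p) :
    minInit p ≤ (ps.map minInit).sum := by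
  induction h with
  | nil => simp [minInit]
  | cons hqr _ ih =>
    rw [List.map_cons, List.sum_cons]
    exact (minInit_le_add_of_interleave hqr).trans (add_le_add_right ih _)

end CRNVerif
end

section
/- For any formal pathway q consisting of reactions from the formal basis F of a regular CRN C, there exists a formal pathway p in C with the same minimal initial state and final state as q, such that p can be interpreted as q. -/
namespace CRNVerif

variable {σ : Type} [DecidableEq σ]

/-!
Each reaction `r` of the formal basis is the net effect `(minInit pᵣ, finalState pᵣ)` of a prime
formal pathway `pᵣ` of `C`, and regularity gives `pᵣ` a turning point. Concatenating these
pathways along `q` yields `p`: the minimal initial and final states of a concatenation depend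
only on those of its pieces, so `p` has the net effect of `q`. Annotating the turning point of
each `pᵣ` with `r` decomposes `p` into prime pathways whose annotations read off `q`.
-/

lemma finalFrom_eq_of_minInit_le (p : Pathway σ) {S : State σ} (hS : minInit p ≤ S) :
    finalFrom S p = S - minInit p + finalState p := by
  induction p generalizing S with
  | nil => simp [finalFrom, minInit, finalState]
  | cons r p ih =>
    have hle : ∀ T : State σ, minInit (r :: p) ≤ T → minInit p ≤ applyRxn T r := by
      intro T hT
      rw [Multiset.le_iff_count] at hT ⊢
      intro x
      have := hT x
      simp only [minInit, applyRxn, Multiset.count_add, Multiset.count_sub] at this ⊢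
      omega
    change finalFrom (applyRxn S r) p = S - minInit (r :: p) + finalFrom _ (r :: p)
    rw [finalFrom, ih (hle S hS), ih (hle _ le_rfl)]
    rw [Multiset.le_iff_count] at hS
    ext x
    have := hS x
    simp only [minInit, applyRxn, Multiset.count_add, Multiset.count_sub] at this ⊢
    omega

lemma finalState_cons (r : Reaction σ) (p : Pathway σ) :
    finalState (r :: p) = r.2 - minInit p + finalState p := by
  have hle : minInit p ≤ applyRxn (minInit (r :: p)) r := by
    rw [Multiset.le_iff_count]
    intro x
    simp only [minInit, applyRxn, Multiset.count_add, Multiset.count_sub]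
    omega
  change finalFrom (applyRxn (minInit (r :: p)) r) p = _
  rw [finalFrom_eq_of_minInit_le _ hle]
  ext x
  simp only [minInit, applyRxn, Multiset.count_add, Multiset.count_sub]
  omega

lemma finalFrom_append (S : State σ) (p q : Pathway σ) :
    finalFrom S (p ++ q) = finalFrom (finalFrom S p) q := by
  induction p generalizing S with
  | nil => rfl
  | cons r p ih => exact ih (applyRxn S r)

lemma minInit_append (p q : Pathway σ) :
    minInit (p ++ q) = minInit p + (minInit q - finalState p) := by
  induction p with
  | nil => simp [minInit, finalState, finalFrom]
  | cons r p ih =>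
    change r.1 + (minInit (p ++ q) - r.2) = _
    rw [ih, finalState_cons]
    ext x
    simp only [minInit, Multiset.count_add, Multiset.count_sub]
    omega

lemma finalState_append (p q : Pathway σ) :
    finalState (p ++ q) = finalState p - minInit q + finalState q := by
  have hp : minInit p ≤ minInit (p ++ q) := by
    rw [minInit_append]
    exact Multiset.le_add_right _ _
  have hq : minInit q ≤ finalFrom (minInit (p ++ q)) p := by
    rw [finalFrom_eq_of_minInit_le _ hp, minInit_append, Multiset.le_iff_count]
    intro x
    simp only [Multiset.count_add, Multiset.count_sub]
    omega
  change finalFrom (minInit (p ++ q)) (p ++ q) = _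
  rw [finalFrom_append, finalFrom_eq_of_minInit_le _ hq, finalFrom_eq_of_minInit_le _ hp,
    minInit_append]
  ext x
  simp only [Multiset.count_add, Multiset.count_sub]
  omega

lemma interleave_append {α : Type*} (l₁ l₂ : List α) : Interleave l₁ l₂ (l₁ ++ l₂) := by
  induction l₁ with
  | nil =>
    induction l₂ with
    | nil => exact .nil
    | cons _ _ ih => exact .right ih
  | cons _ _ ih => exact .left ih

lemma filterMap_ite_eq_replicate {α β : Type*} [DecidableEq α] (l : List α) (a : α) (b : β) :
    l.filterMap (fun x => if x = a then some b else none) = List.replicate (l.count a) b := by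
  induction l with
  | nil => rfl
  | cons x l ih => by_cases h : x = a <;> simp [h, ih, List.replicate_succ]

lemma reduceOption_map_range_ite {β : Type*} {n j : ℕ} (hj : j < n) (b : β) :
    ((List.range n).map fun i => if i = j then some b else none).reduceOption = [b] := by
  simp [List.reduceOption, filterMap_ite_eq_replicate, List.count_range, hj]

def annotateAt {α β : Type*} (l : List α) (j : ℕ) (b : β) : List (α × Option β) :=
  l.zip ((List.range l.length).map fun i => if i = j then some b else none)

section annotateAt

variable {α β : Type*} (l : List α) (j : ℕ) (b : β)

lemma map_fst_annotateAt : (annotateAt l j b).map Prod.fst = l :=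
  List.map_fst_zip (by simp)

lemma map_snd_annotateAt :
    (annotateAt l j b).map Prod.snd =
      (List.range l.length).map fun i => if i = j then some b else none :=
  List.map_snd_zip (by simp)

lemma length_annotateAt : (annotateAt l j b).length = l.length := by
  simp [annotateAt]

end annotateAt

lemma goodAnnotation_annotateAt {fm : σ → Bool} {p : Pathway σ} {j : ℕ}
    (hp : PrimePathway fm p) (hj : TurningAt fm p j) :
    GoodAnnotation fm (annotateAt p j (minInit p, finalState p)) := by
  refine ⟨?_, j, ?_, ?_⟩ <;> rw [map_fst_annotateAt]
  · exact hp
  · exact hj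
  · rw [map_snd_annotateAt, length_annotateAt]

lemma GoodAnnotation.reduceOption_map_snd {fm : σ → Bool}
    {a : List (Reaction σ × Option (Reaction σ))} (ha : GoodAnnotation fm a) :
    (a.map Prod.snd).reduceOption =
      [(minInit (a.map Prod.fst), finalState (a.map Prod.fst))] := by
  obtain ⟨-, j, ⟨hj, -⟩, hsnd⟩ := ha
  rw [hsnd]
  exact reduceOption_map_range_ite (by simpa using hj) _

lemma exists_goodAnnotation_of_mem_formalBasis {fm : σ → Bool} {C : Finset (Reaction σ)}
    (hreg : RegularCRN fm C) {r : Reaction σ} (hr : r ∈ formalBasis fm C) :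
    ∃ a : List (Reaction σ × Option (Reaction σ)), PathwayOf C (a.map Prod.fst) ∧
      GoodAnnotation fm a ∧ r = (minInit (a.map Prod.fst), finalState (a.map Prod.fst)) := by
  obtain ⟨p, hpC, hprime, rfl⟩ := hr
  obtain ⟨-, j, hj⟩ := hreg p hpC hprime
  refine ⟨annotateAt p j (minInit p, finalState p), ?_, goodAnnotation_annotateAt hprime hj, ?_⟩
    <;> rw [map_fst_annotateAt]
  exact hpC

/-- The decomposition part of `Interpreted fm p q`. -/
def AnnotatedDecomposition (fm : σ → Bool) (p q : Pathway σ) : Prop :=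
  ∃ ap : List (Reaction σ × Option (Reaction σ)),
    ap.map Prod.fst = p ∧ (ap.map Prod.snd).reduceOption = q ∧
    ∃ aps, InterleaveMany aps ap ∧ ∀ a ∈ aps, GoodAnnotation fm a

namespace AnnotatedDecomposition

variable {fm : σ → Bool}

lemma nil : AnnotatedDecomposition fm [] [] :=
  ⟨[], rfl, rfl, [], .nil, by simp⟩

lemma prepend_goodAnnotation {p q : Pathway σ} {a : List (Reaction σ × Option (Reaction σ))}
    (ha : GoodAnnotation fm a) (h : AnnotatedDecomposition fm p q) :
    AnnotatedDecomposition fm (a.map Prod.fst ++ p) ((a.map Prod.snd).reduceOption ++ q) := by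
  obtain ⟨ap, rfl, rfl, aps, hap, haps⟩ := h
  refine ⟨a ++ ap, List.map_append, by rw [List.map_append, List.reduceOption_append],
    a :: aps, .cons (interleave_append a ap) hap, List.forall_mem_cons.2 ⟨ha, haps⟩⟩

lemma ne_nil {p q : Pathway σ} (h : AnnotatedDecomposition fm p q) (hq : q ≠ []) : p ≠ [] := by
  rintro rfl
  obtain ⟨ap, hap, rfl, -⟩ := h
  simp_all

end AnnotatedDecomposition

lemma exists_annotatedDecomposition {fm : σ → Bool} {C : Finset (Reaction σ)}
    (hreg : RegularCRN fm C) (q : Pathway σ) (hq : ∀ r ∈ q, r ∈ formalBasis fm C) :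
    ∃ p, PathwayOf C p ∧ minInit p = minInit q ∧ finalState p = finalState q ∧
      AnnotatedDecomposition fm p q := by
  induction q with
  | nil => exact ⟨[], by simp [PathwayOf], rfl, rfl, .nil⟩
  | cons r q ih =>
    obtain ⟨p, hpC, hinit, hfinal, hdec⟩ := ih fun s hs => hq s (List.mem_cons_of_mem r hs)
    obtain ⟨a, haC, ha, rfl⟩ := exists_goodAnnotation_of_mem_formalBasis hreg (hq r (by simp))
    refine ⟨a.map Prod.fst ++ p, ?_, ?_, ?_, ?_⟩
    · exact fun s hs => (List.mem_append.1 hs).elim (haC s) (hpC s)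
    · rw [minInit_append, hinit]
      rfl
    · rw [finalState_append, finalState_cons, hinit, hfinal]
    · simpa [ha.reduceOption_map_snd] using hdec.prepend_goodAnnotation ha

theorem exists_pathway_interpreted_as_basis_pathway_general {σ : Type} [DecidableEq σ]
    (fm : σ → Bool) (C : Finset (Reaction σ))
    (hreg : RegularCRN fm C) (q : Pathway σ)
    (hq : ∀ r ∈ q, r ∈ formalBasis fm C) (hqf : FormalPathway fm q) :
    ∃ p : Pathway σ, PathwayOf C p ∧ FormalPathway fm p ∧
      minInit p = minInit q ∧ finalState p = finalState q ∧ Interpreted fm p q := by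
  obtain ⟨p, hpC, hinit, hfinal, hdec⟩ := exists_annotatedDecomposition hreg q hq
  have hfinalFrom : finalFrom (minInit p) q = finalState p := by
    rw [hinit, hfinal]
    rfl
  exact ⟨p, hpC, ⟨hdec.ne_nil hqf.1, hinit ▸ hqf.2.1, hfinal ▸ hqf.2.2⟩, hinit, hfinal,
    hinit.ge, hfinalFrom, hdec⟩

/-- For any formal pathway `q` of the formal basis of a regular CRN `C`, there is a
formal pathway `p` of `C` with the same minimal initial and final states that can be
interpreted as `q`. -/
theorem exists_pathway_interpreted_as_basis_pathway {σ : Type} [DecidableEq σ]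
    (fm : σ → Bool) (C : Finset (Reaction σ)) (hC : NontrivialRxns C)
    (hreg : RegularCRN fm C) (q : Pathway σ)
    (hq : ∀ r ∈ q, r ∈ formalBasis fm C) (hqf : FormalPathway fm q) :
    ∃ p : Pathway σ, PathwayOf C p ∧ FormalPathway fm p ∧
      minInit p = minInit q ∧ finalState p = finalState q ∧ Interpreted fm p q :=
  exists_pathway_interpreted_as_basis_pathway_general fm C hreg q hq hqf

end CRNVerif
end

section
/- If two tidy and regular CRNs C1 and C2 are pathway decomposition equivalent (have the same formal basis up to trivial reactions), then they induce the same reachability relation between formal states: a formal state T is reachable from a formal state S via reactions of C1 if and only if it is reachable via reactions of C2. -/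
/-!
A formal pathway of `C₁` from `S` to `T` splits into interleaved prime formal pathways, each of
which, by regularity, has a turning point. Replacing each prime by its formal basis reaction
(initial state → final state) and firing these in the order of the turning points gives a pathway
that can occur in `S` and still ends in `T`. The nontrivial basis reactions of `C₁` are basis
reactions of `C₂`, hence realised by pathways of `C₂`, and the trivial ones can be dropped.
-/

namespace CRNVerif

variable {σ : Type} [DecidableEq σ]

lemma count_applyRxn (S : State σ) (r : Reaction σ) (x : σ) :
    (applyRxn S r).count x = S.count x - r.1.count x + r.2.count x := by
  simp [applyRxn, Multiset.count_sub]

lemma minInit_cons_le {r : Reaction σ} {p : Pathway σ} {S : State σ} :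
    minInit (r :: p) ≤ S ↔ r.1 ≤ S ∧ minInit p ≤ applyRxn S r := by
  simp only [Multiset.le_iff_count, minInit, count_applyRxn, Multiset.count_add,
    Multiset.count_sub]
  refine ⟨fun h => ⟨fun x => ?_, fun x => ?_⟩, fun ⟨h₁, h₂⟩ x => ?_⟩
  · have := h x; omega
  · have := h x; omega
  · have := h₁ x; have := h₂ x; omega

lemma minInit_append_le {p q : Pathway σ} {S : State σ}
    (hp : minInit p ≤ S) (hq : minInit q ≤ finalFrom S p) : minInit (p ++ q) ≤ S := by
  induction p generalizing S with
  | nil => exact hq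
  | cons r p ih =>
    obtain ⟨h₁, h₂⟩ := minInit_cons_le.mp hp
    exact minInit_cons_le.mpr ⟨h₁, ih h₂ hq⟩

lemma minInit_take_le (p : Pathway σ) (t : ℕ) : minInit (p.take t) ≤ minInit p := by
  induction p generalizing t with
  | nil => simp
  | cons r p ih =>
    cases t with
    | zero => simp [minInit]
    | succ t => exact add_le_add_right (tsub_le_tsub_right (ih t) _) _

lemma fst_le_finalFrom_take {p : Pathway σ} {S : State σ} (h : minInit p ≤ S)
    {t : ℕ} {r : Reaction σ} (hr : p[t]? = some r) : r.1 ≤ finalFrom S (p.take t) := by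
  induction p generalizing S t with
  | nil => simp at hr
  | cons r' p ih =>
    obtain ⟨h₁, h₂⟩ := minInit_cons_le.mp h
    cases t with
    | zero => simp only [List.getElem?_cons_zero, Option.some.injEq] at hr; exact hr ▸ h₁
    | succ t => exact ih h₂ hr

def netZ (p : Pathway σ) (x : σ) : ℤ :=
  (p.map fun r => (r.2.count x : ℤ) - r.1.count x).sum

@[simp] lemma netZ_cons (r : Reaction σ) (p : Pathway σ) (x : σ) :
    netZ (r :: p) x = (r.2.count x : ℤ) - r.1.count x + netZ p x := by
  simp [netZ]

lemma count_finalFrom {p : Pathway σ} {S : State σ} (h : minInit p ≤ S) (x : σ) :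
    ((finalFrom S p).count x : ℤ) = S.count x + netZ p x := by
  induction p generalizing S with
  | nil => simp [finalFrom, netZ]
  | cons r p ih =>
    obtain ⟨h₁, h₂⟩ := minInit_cons_le.mp h
    have := Multiset.le_iff_count.mp h₁ x
    rw [finalFrom, ih h₂, netZ_cons, count_applyRxn]
    omega

lemma count_finalState (p : Pathway σ) (x : σ) :
    ((finalState p).count x : ℤ) = (minInit p).count x + netZ p x :=
  count_finalFrom le_rfl x

lemma count_stateAt (p : Pathway σ) (i : ℕ) (x : σ) :
    ((stateAt p i).count x : ℤ) = (minInit p).count x + netZ (p.take i) x :=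
  count_finalFrom (minInit_take_le p i) x

lemma finalFrom_eq_of_le {p : Pathway σ} {S : State σ} (h : minInit p ≤ S) :
    finalFrom S p = S - minInit p + finalState p := by
  ext x
  have := count_finalFrom h x
  have := count_finalState p x
  have := Multiset.le_iff_count.mp h x
  rw [Multiset.count_add, Multiset.count_sub]
  omega

lemma Reachable.refl (C : Finset (Reaction σ)) (S : State σ) : Reachable C S S :=
  ⟨[], by simp [PathwayOf], Multiset.zero_le _, rfl⟩

lemma Reachable.trans {C : Finset (Reaction σ)} {S T U : State σ}
    (h₁ : Reachable C S T) (h₂ : Reachable C T U) : Reachable C S U := by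
  obtain ⟨p, hpC, hpS, rfl⟩ := h₁
  obtain ⟨q, hqC, hqT, rfl⟩ := h₂
  refine ⟨p ++ q, fun r hr => ?_, minInit_append_le hpS hqT, finalFrom_append S p q⟩
  rcases List.mem_append.mp hr with hr | hr
  exacts [hpC r hr, hqC r hr]

lemma reachable_applyRxn {C : Finset (Reaction σ)} {S : State σ} {r : Reaction σ} (hS : r.1 ≤ S)
    (hr : TrivialRxn r ∨ ∃ v, PathwayOf C v ∧ minInit v = r.1 ∧ finalState v = r.2) :
    Reachable C S (applyRxn S r) := by
  rcases hr with htriv | ⟨v, hvC, hv₁, hv₂⟩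
  · rw [applyRxn, ← htriv, tsub_add_cancel_of_le hS]
    exact Reachable.refl C S
  · exact ⟨v, hvC, hv₁ ▸ hS, by rw [finalFrom_eq_of_le (hv₁ ▸ hS), hv₁, hv₂, applyRxn]⟩

lemma reachable_finalFrom {C : Finset (Reaction σ)} {w : Pathway σ}
    (hw : ∀ r ∈ w, TrivialRxn r ∨ ∃ v, PathwayOf C v ∧ minInit v = r.1 ∧ finalState v = r.2)
    {S : State σ} (hS : minInit w ≤ S) : Reachable C S (finalFrom S w) := by
  induction w generalizing S with
  | nil => exact Reachable.refl C S
  | cons r w ih =>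
    obtain ⟨h₁, h₂⟩ := minInit_cons_le.mp hS
    exact (reachable_applyRxn h₁ (hw r List.mem_cons_self)).trans
      (ih (fun r' hr' => hw r' (List.mem_cons_of_mem _ hr')) h₂)

lemma Interleave.length_eq {α : Type*} {q r p : List α} (h : Interleave q r p) :
    q.length + r.length = p.length := by
  induction h with
  | nil => rfl
  | left _ ih => simp only [List.length_cons]; omega
  | right _ ih => simp only [List.length_cons]; omega

/-- A decomposition of a list into interleaved subsequences is encoded by a list of labels,
one per entry; `sel k L p` is the subsequence of `p` labelled `k`. -/
def sel {α : Type*} (k : ℕ) : List ℕ → List α → List α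
  | o :: L, a :: p => if o = k then a :: sel k L p else sel k L p
  | _, _ => []

section Labels

variable {α : Type*}

@[simp] lemma sel_nil_left (k : ℕ) (p : List α) : sel k [] p = [] := by
  cases p <;> rfl

@[simp] lemma sel_nil_right (k : ℕ) (L : List ℕ) : sel k L ([] : List α) = [] := by
  cases L <;> rfl

lemma sel_replicate_zero (p : List α) : sel 0 (List.replicate p.length 0) p = p := by
  induction p with
  | nil => rfl
  | cons a p ih => rw [List.length_cons, List.replicate_succ]; simp [sel, ih]

lemma sel_sublist (k : ℕ) (L : List ℕ) (p : List α) : (sel k L p).Sublist p := by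
  induction L generalizing p with
  | nil => simp
  | cons o L ih =>
    cases p with
    | nil => simp
    | cons a p =>
      simp only [sel]
      split_ifs
      exacts [(ih p).cons_cons a, (ih p).cons a]

lemma length_sel (k : ℕ) {L : List ℕ} {p : List α} (hL : L.length = p.length) :
    (sel k L p).length = L.count k := by
  induction L generalizing p with
  | nil => simp
  | cons o L ih =>
    cases p with
    | nil => simp at hL
    | cons a p =>
      simp only [List.length_cons, Nat.succ_inj] at hL
      by_cases h : o = k <;> simp [sel, h, ih hL]

lemma sel_take (k t : ℕ) (L : List ℕ) (p : List α) :
    sel k (L.take t) (p.take t) = (sel k L p).take ((L.take t).count k) := by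
  induction t generalizing L p with
  | zero => simp
  | succ t ih =>
    cases L with
    | nil => simp
    | cons o L =>
      cases p with
      | nil => simp
      | cons a p => by_cases h : o = k <;> simp [sel, h, ih]

lemma sum_map_sel {M : Type*} [AddCommMonoid M] (f : α → M) {n : ℕ} {L : List ℕ} {p : List α}
    (hL : L.length = p.length) (hLn : ∀ o ∈ L, o < n) :
    ∑ k ∈ Finset.range n, ((sel k L p).map f).sum = (p.map f).sum := by
  induction L generalizing p with
  | nil => simp [List.length_eq_zero_iff.mp hL.symm]
  | cons o L ih =>
    cases p with
    | nil => simp at hL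
    | cons a p =>
      simp only [List.length_cons, Nat.succ_inj] at hL
      have hsel : ∀ k, ((sel k (o :: L) (a :: p)).map f).sum =
          (if o = k then f a else 0) + ((sel k L p).map f).sum := by
        intro k; by_cases h : o = k <;> simp [sel, h]
      simp only [hsel, Finset.sum_add_distrib, Finset.sum_ite_eq,
        Finset.mem_range.mpr (hLn o List.mem_cons_self), if_true,
        ih hL (fun o' ho' => hLn o' (List.mem_cons_of_mem _ ho')), List.map_cons, List.sum_cons]

lemma getElem?_sel_count {L : List ℕ} {p : List α} (hL : L.length = p.length) {t k : ℕ}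
    (hk : L[t]? = some k) : (sel k L p)[(L.take t).count k]? = p[t]? := by
  induction L generalizing p t with
  | nil => simp at hk
  | cons o L ih =>
    cases p with
    | nil => simp at hL
    | cons a p =>
      simp only [List.length_cons, Nat.succ_inj] at hL
      cases t with
      | zero => simp_all [sel]
      | succ t => by_cases h : o = k <;> simp_all [sel]

lemma count_take_succ {L : List ℕ} {t k : ℕ} (hk : L[t]? = some k) (k' : ℕ) :
    (L.take (t + 1)).count k' = (L.take t).count k' + if k = k' then 1 else 0 := by
  rw [List.take_add_one, hk]
  by_cases h : k = k' <;> simp [List.count_append, h]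

lemma Interleave.exists_labels {q r p : List α} (h : Interleave q r p) {n m : ℕ}
    {L₁ L₂ : List ℕ} (h₁ : L₁.length = q.length) (h₂ : L₂.length = r.length)
    (hn : ∀ o ∈ L₁, o < n) (hm : ∀ o ∈ L₂, o < m) :
    ∃ L : List ℕ, L.length = p.length ∧ (∀ o ∈ L, o < n + m) ∧
      (∀ k < n, sel k L p = sel k L₁ q) ∧ ∀ k, sel (n + k) L p = sel k L₂ r := by
  induction h generalizing L₁ L₂ with
  | nil =>
    rw [List.length_eq_zero_iff.mp h₁, List.length_eq_zero_iff.mp h₂]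
    exact ⟨[], rfl, by simp, by simp, by simp⟩
  | @left a q r p _ ih =>
    obtain _ | ⟨o, L₁⟩ := L₁
    · simp at h₁
    simp only [List.length_cons, Nat.succ_inj] at h₁
    obtain ⟨L, hL, hLb, hsel₁, hsel₂⟩ :=
      ih h₁ h₂ (fun o' ho' => hn o' (List.mem_cons_of_mem _ ho')) hm
    have ho := hn o List.mem_cons_self
    refine ⟨o :: L, by simp [hL], ?_, fun k _ => by simp [sel, hsel₁ k ‹_›], fun k => ?_⟩
    · simp only [List.mem_cons, forall_eq_or_imp]; exact ⟨by omega, hLb⟩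
    · simp [sel, hsel₂ k, show o ≠ n + k by omega]
  | @right a q r p _ ih =>
    obtain _ | ⟨o, L₂⟩ := L₂
    · simp at h₂
    simp only [List.length_cons, Nat.succ_inj] at h₂
    obtain ⟨L, hL, hLb, hsel₁, hsel₂⟩ :=
      ih h₁ h₂ hn (fun o' ho' => hm o' (List.mem_cons_of_mem _ ho'))
    have ho := hm o List.mem_cons_self
    refine ⟨(n + o) :: L, by simp [hL], ?_, fun k hk => ?_, fun k => ?_⟩
    · simp only [List.mem_cons, forall_eq_or_imp]; exact ⟨by omega, hLb⟩
    · simp [sel, hsel₁ k hk, show n + o ≠ k by omega]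
    · by_cases h : o = k <;> simp [sel, hsel₂ k, h]

end Labels

lemma exists_prime_labels (fm : σ → Bool) {p : Pathway σ} (hp : FormalPathway fm p) :
    ∃ (n : ℕ) (L : List ℕ), L.length = p.length ∧ (∀ o ∈ L, o < n) ∧
      ∀ k < n, PrimePathway fm (sel k L p) := by
  induction h : p.length using Nat.strong_induction_on generalizing p with
  | _ len ih =>
  by_cases hdec : FDecomposable fm p
  · obtain ⟨q₁, q₂, hq₁, hq₂, hint, hf₁, hf₂⟩ := hdec
    have hlen := hint.length_eq
    have := List.length_pos_iff.mpr hq₁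
    have := List.length_pos_iff.mpr hq₂
    obtain ⟨n₁, L₁, hL₁, hb₁, hpr₁⟩ := ih _ (by omega) hf₁ rfl
    obtain ⟨n₂, L₂, hL₂, hb₂, hpr₂⟩ := ih _ (by omega) hf₂ rfl
    obtain ⟨L, hL, hb, hsel₁, hsel₂⟩ := hint.exists_labels hL₁ hL₂ hb₁ hb₂
    refine ⟨n₁ + n₂, L, hL.trans h, hb, fun k hk => ?_⟩
    by_cases hkn : k < n₁
    · rw [hsel₁ k hkn]; exact hpr₁ k hkn
    · obtain ⟨k, rfl⟩ := Nat.exists_eq_add_of_le (not_lt.mp hkn)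
      rw [hsel₂ k]; exact hpr₂ k (by omega)
  · refine ⟨1, List.replicate p.length 0, by simp [h], by simp, fun k hk => ?_⟩
    rw [Nat.lt_one_iff.mp hk, sel_replicate_zero]
    exact ⟨hp, hdec⟩

lemma count_formalPart {fm : σ → Bool} (X : State σ) {x : σ} (hx : fm x = true) :
    (formalPart fm X).count x = X.count x := by
  simp [formalPart, hx]

namespace TurningAt

variable {fm : σ → Bool} {q : Pathway σ} {j : ℕ} {x : σ}

lemma netZ_take_nonpos (h : TurningAt fm q j) (hx : fm x = true) {i : ℕ} (hi : i ≤ j) :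
    netZ (q.take i) x ≤ 0 := by
  obtain ⟨-, h₁, -, -⟩ := h
  have := Multiset.le_iff_count.mp (h₁ i hi) x
  rw [count_formalPart _ hx] at this
  have := count_stateAt q i x
  omega

lemma netZ_take_le (h : TurningAt fm q j) (hx : fm x = true) {i : ℕ} (hji : j < i)
    (hi : i ≤ q.length) : netZ (q.take i) x ≤ netZ q x := by
  obtain ⟨-, -, h₂, -⟩ := h
  have := Multiset.le_iff_count.mp (h₂ i hji hi) x
  rw [count_formalPart _ hx] at this
  have := count_stateAt q i x
  have := count_finalState q x
  omega

lemma count_minInit_add_netZ_le (h : TurningAt fm q j) (hx : fm x = true) {r : Reaction σ}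
    (hr : q[j]? = some r) : ((minInit q).count x : ℤ) + netZ (q.take j) x ≤ r.1.count x := by
  obtain ⟨hj, -, -, h₃⟩ := h
  obtain rfl : q[j] = r := by simpa [hj] using hr
  have := congrArg (Multiset.count x) h₃
  rw [count_formalPart _ hx, Multiset.count_sub] at this
  have := count_stateAt q j x
  simp only [List.get_eq_getElem, Multiset.count_zero] at *
  omega

end TurningAt

section BasisRun

variable {fm : σ → Bool} {p : Pathway σ} {L : List ℕ} {n : ℕ} {S : State σ} {j : ℕ → ℕ}

/-- With `j k` the turning point of the `k`-th subpathway, counted in that subpathway: the net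
effect of the subpathways that have turned within the first `t` steps of `p`. -/
def turnedNet (L : List ℕ) (p : Pathway σ) (n : ℕ) (j : ℕ → ℕ) (t : ℕ) (x : σ) : ℤ :=
  ∑ k ∈ Finset.range n, if j k < (L.take t).count k then netZ (sel k L p) x else 0

lemma count_finalFrom_take (hL : L.length = p.length) (hLn : ∀ o ∈ L, o < n)
    (hS : minInit p ≤ S) (t : ℕ) (x : σ) :
    ((finalFrom S (p.take t)).count x : ℤ) =
      S.count x + ∑ k ∈ Finset.range n, netZ ((sel k L p).take ((L.take t).count k)) x := by
  rw [count_finalFrom ((minInit_take_le p t).trans hS)]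
  have hLt : (L.take t).length = (p.take t).length := by simp [hL]
  simp only [netZ, ← sel_take, sum_map_sel _ hLt fun o ho => hLn o (List.mem_of_mem_take ho)]

lemma turnedNet_succ {t k : ℕ} (hk : L[t]? = some k) (hkn : k < n) (x : σ) :
    turnedNet L p n j (t + 1) x = turnedNet L p n j t x +
      if (L.take t).count k = j k then netZ (sel k L p) x else 0 := by
  have hterm : ∀ k', (if j k' < (L.take (t + 1)).count k' then netZ (sel k' L p) x else 0) =
      (if j k' < (L.take t).count k' then netZ (sel k' L p) x else 0) +
        if k = k' then (if (L.take t).count k = j k then netZ (sel k L p) x else 0) else 0 := by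
    intro k'
    rw [count_take_succ hk]
    by_cases h : k = k'
    · subst h
      simp only [↓reduceIte]
      by_cases hc : (L.take t).count k = j k
      · rw [if_pos (by omega), if_neg (by omega), if_pos hc, zero_add]
      · rw [if_neg hc, add_zero]
        by_cases h' : j k < (L.take t).count k
        · rw [if_pos h', if_pos (by omega)]
        · rw [if_neg h', if_neg (by omega)]
    · simp [h]
  simp only [turnedNet, hterm, Finset.sum_add_distrib, Finset.sum_ite_eq,
    Finset.mem_range.mpr hkn, if_true]

lemma turnedNet_length (hL : L.length = p.length) (hLn : ∀ o ∈ L, o < n)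
    (hj : ∀ k < n, j k < (sel k L p).length) (x : σ) :
    turnedNet L p n j p.length x = netZ p x := by
  rw [turnedNet, ← hL, List.take_length]
  rw [Finset.sum_congr rfl fun k hk => if_pos (length_sel k hL ▸ hj k (Finset.mem_range.mp hk))]
  exact sum_map_sel _ hL hLn

/-- At the turning point of the `k`-th subpathway, the formal species it consumes are already
present in the state reached by firing the formal reactions of the subpathways that turned
earlier: subpathways yet to turn have consumed formal species, and those that turned have
produced no more than their final states. -/
lemma count_minInit_le_turnedNet (hL : L.length = p.length) (hLn : ∀ o ∈ L, o < n)
    (hS : minInit p ≤ S) (hj : ∀ k < n, TurningAt fm (sel k L p) (j k)) {t k : ℕ}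
    (hk : L[t]? = some k) (hc : (L.take t).count k = j k) {x : σ} (hx : fm x = true) :
    ((minInit (sel k L p)).count x : ℤ) ≤ S.count x + turnedNet L p n j t x := by
  have hkn : k < n := hLn k (List.mem_of_getElem? hk)
  have ht : t < p.length := hL ▸ (List.getElem?_eq_some_iff.mp hk).1
  set f := fun i => netZ ((sel i L p).take ((L.take t).count i)) x
  set g := fun i => if j i < (L.take t).count i then netZ (sel i L p) x else 0
  have havail : ((p[t]).1.count x : ℤ) ≤ S.count x + ∑ i ∈ Finset.range n, f i := by
    rw [← count_finalFrom_take hL hLn hS]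
    exact_mod_cast Multiset.le_iff_count.mp
      (fst_le_finalFrom_take hS (List.getElem?_eq_getElem ht)) x
  have hturn : ((minInit (sel k L p)).count x : ℤ) + f k ≤ (p[t]).1.count x := by
    simp only [f, hc]
    exact (hj k hkn).count_minInit_add_netZ_le hx
      (by rw [← hc, getElem?_sel_count hL hk, List.getElem?_eq_getElem ht])
  have hrest : ∀ i ∈ (Finset.range n).erase k, f i ≤ g i := by
    intro i hi
    have hin := Finset.mem_range.mp (Finset.mem_of_mem_erase hi)
    simp only [f, g]
    split_ifs with hji
    · refine (hj i hin).netZ_take_le hx hji ?_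
      rw [length_sel i hL]
      exact (List.take_sublist _ _).count_le i
    · exact (hj i hin).netZ_take_nonpos hx (not_lt.mp hji)
  have hsplit := Finset.add_sum_erase (Finset.range n) f (Finset.mem_range.mpr hkn)
  have hg : ∑ i ∈ (Finset.range n).erase k, g i = turnedNet L p n j t x :=
    Finset.sum_erase _ (by simp [g, hc])
  have := Finset.sum_le_sum hrest
  linarith

lemma exists_basis_run_take (hL : L.length = p.length) (hLn : ∀ o ∈ L, o < n)
    (hS : minInit p ≤ S) (hform : ∀ k < n, FormalState fm (minInit (sel k L p)))
    (hj : ∀ k < n, TurningAt fm (sel k L p) (j k)) :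
    ∀ t ≤ p.length, ∃ w : Pathway σ,
      (∀ r ∈ w, ∃ k < n, r = (minInit (sel k L p), finalState (sel k L p))) ∧
      minInit w ≤ S ∧ ∀ x, ((finalFrom S w).count x : ℤ) = S.count x + turnedNet L p n j t x := by
  intro t ht
  induction t with
  | zero => exact ⟨[], by simp, Multiset.zero_le _, fun x => by simp [finalFrom, turnedNet]⟩
  | succ t ih =>
    obtain ⟨w, hw, hwS, hcount⟩ := ih (by omega)
    obtain ⟨k, hk⟩ : ∃ k, L[t]? = some k := ⟨L[t], List.getElem?_eq_getElem (by omega)⟩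
    have hkn : k < n := hLn k (List.mem_of_getElem? hk)
    by_cases hc : (L.take t).count k = j k
    · have hle : minInit (sel k L p) ≤ finalFrom S w := by
        refine Multiset.le_iff_count.mpr fun x => ?_
        by_cases hx : fm x = true
        · have := count_minInit_le_turnedNet hL hLn hS hj hk hc hx
          have := hcount x
          omega
        · simp [Multiset.count_eq_zero.mpr fun hmem => hx (hform k hkn x hmem)]
      refine ⟨w ++ [(minInit (sel k L p), finalState (sel k L p))], ?_,
        minInit_append_le hwS (by simpa [minInit] using hle), fun x => ?_⟩
      · intro r hr
        rcases List.mem_append.mp hr with hr | hr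
        · exact hw r hr
        · exact ⟨k, hkn, List.mem_singleton.mp hr⟩
      · have := Multiset.le_iff_count.mp hle x
        have := count_finalState (sel k L p) x
        have := hcount x
        rw [finalFrom_append, finalFrom, finalFrom, count_applyRxn, turnedNet_succ hk hkn,
          if_pos hc]
        dsimp only
        omega
    · exact ⟨w, hw, hwS, fun x => by rw [turnedNet_succ hk hkn, if_neg hc, hcount x, add_zero]⟩

/-- The interpretation theorem: `w` fires the formal reactions of the subpathways in the order of
their turning points. -/
theorem exists_basis_run (hL : L.length = p.length) (hLn : ∀ o ∈ L, o < n)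
    (hreg : ∀ k < n, RegularPathway fm (sel k L p)) (hS : minInit p ≤ S) :
    ∃ w : Pathway σ,
      (∀ r ∈ w, ∃ k < n, r = (minInit (sel k L p), finalState (sel k L p))) ∧
      minInit w ≤ S ∧ finalFrom S w = finalFrom S p := by
  choose! j hj using fun k hk => (hreg k hk).2
  obtain ⟨w, hw, hwS, hcount⟩ :=
    exists_basis_run_take hL hLn hS (fun k hk => (hreg k hk).1.2.1) hj p.length le_rfl
  refine ⟨w, hw, hwS, Multiset.ext.mpr fun x => ?_⟩
  have := hcount x
  rw [turnedNet_length hL hLn fun k hk => (hj k hk).1, ← count_finalFrom hS] at this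
  exact_mod_cast this

end BasisRun

lemma Reachable.of_formalBasis_subset {fm : σ → Bool} {C₁ C₂ : Finset (Reaction σ)}
    (hr : RegularCRN fm C₁)
    (hsub : ∀ r ∈ formalBasis fm C₁, ¬ TrivialRxn r → r ∈ formalBasis fm C₂)
    {S T : State σ} (hS : FormalState fm S) (hT : FormalState fm T) (h : Reachable C₁ S T) :
    Reachable C₂ S T := by
  obtain ⟨p, hpC, hpS, rfl⟩ := h
  rcases eq_or_ne p [] with rfl | hp
  · exact Reachable.refl C₂ S
  have hT' : finalState p ≤ finalFrom S p := by
    rw [finalFrom_eq_of_le hpS]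
    exact le_add_self
  have hpf : FormalPathway fm p :=
    ⟨hp, fun x hx => hS x (Multiset.mem_of_le hpS hx), fun x hx => hT x (Multiset.mem_of_le hT' hx)⟩
  obtain ⟨n, L, hL, hLn, hprime⟩ := exists_prime_labels fm hpf
  have hselC : ∀ k, PathwayOf C₁ (sel k L p) :=
    fun k r hr => hpC r ((sel_sublist k L p).subset hr)
  obtain ⟨w, hw, hwS, hwp⟩ :=
    exists_basis_run hL hLn (fun k hk => hr _ (hselC k) (hprime k hk)) hpS
  rw [← hwp]
  refine reachable_finalFrom (fun r hrw => or_iff_not_imp_left.mpr fun hnt => ?_) hwS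
  obtain ⟨k, hk, rfl⟩ := hw r hrw
  obtain ⟨v, hvC, hv, hbasis⟩ := hsub _ ⟨_, hselC k, hprime k hk, rfl⟩ hnt
  exact ⟨v, hvC, (Prod.ext_iff.mp hbasis).1.symm, (Prod.ext_iff.mp hbasis).2.symm⟩

theorem pd_equiv_implies_same_reachability_general {σ : Type} [DecidableEq σ] (fm : σ → Bool)
    (C₁ C₂ : Finset (Reaction σ))
    (hr₁ : RegularCRN fm C₁)
    (hr₂ : RegularCRN fm C₂)
    (heq : EqUpToTrivial (formalBasis fm C₁) (formalBasis fm C₂)) :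
    ∀ S T : State σ, FormalState fm S → FormalState fm T →
      (Reachable C₁ S T ↔ Reachable C₂ S T) := by
  intro S T hS hT
  have hsub : ∀ {A B : Set (Reaction σ)}, EqUpToTrivial A B →
      ∀ r ∈ A, ¬ TrivialRxn r → r ∈ B :=
    fun h r hr hnt => ((Set.ext_iff.mp h r).mp ⟨hr, hnt⟩).1
  exact ⟨Reachable.of_formalBasis_subset hr₁ (hsub heq) hS hT,
    Reachable.of_formalBasis_subset hr₂ (hsub heq.symm) hS hT⟩

/-- Pathway decomposition equivalent tidy and regular CRNs induce the same
reachability relation between formal states. -/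
theorem pd_equiv_implies_same_reachability {σ : Type} [DecidableEq σ] (fm : σ → Bool)
    (C₁ C₂ : Finset (Reaction σ))
    (hC₁ : NontrivialRxns C₁) (ht₁ : StronglyTidy fm C₁) (hr₁ : RegularCRN fm C₁)
    (hC₂ : NontrivialRxns C₂) (ht₂ : StronglyTidy fm C₂) (hr₂ : RegularCRN fm C₂)
    (heq : EqUpToTrivial (formalBasis fm C₁) (formalBasis fm C₂)) :
    ∀ S T : State σ, FormalState fm S → FormalState fm T →
      (Reachable C₁ S T ↔ Reachable C₂ S T) :=
  pd_equiv_implies_same_reachability_general fm C₁ C₂ hr₁ hr₂ heq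

end CRNVerif
end

section
/- If C and C' are two strongly tidy CRNs that share no intermediate species, then their union C ∪ C' is strongly tidy. -/
namespace CRNVerif

variable {σ : Type} [DecidableEq σ]

/-! Split a semiformal pathway `p` of `C ∪ C'` into its `C`-reactions `q₁` and its
`C'`-reactions `q₂`. An intermediate species consumed by `q₁` can only have been produced
by `C`, so it would already be needed initially by `p`; hence `q₁`, and likewise `q₂`, is
semiformal, and strong tidiness provides closing pathways `q` and `q'`. Running `p` from
`minInit q₁ + minInit q₂` shows `finalState p + D = finalState q₁ + finalState q₂` for a
formal state `D`. Since `minInit q` and `minInit q'` contain no formal species, they fit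
side by side into `finalState p`, and `q ++ q'` closes `p`. -/

namespace Interleave

variable {α : Type*}

theorem symm {l₁ l₂ l : List α} (h : Interleave l₁ l₂ l) : Interleave l₂ l₁ l := by
  induction h with
  | nil => exact .nil
  | left _ ih => exact .right ih
  | right _ ih => exact .left ih

theorem append : ∀ l₁ l₂ : List α, Interleave l₁ l₂ (l₁ ++ l₂)
  | [], [] => .nil
  | [], _ :: l₂ => .right (append [] l₂)
  | _ :: l₁, l₂ => .left (append l₁ l₂)

theorem filter_not (P : α → Bool) (l : List α) :
    Interleave (l.filter P) (l.filter (fun a => !P a)) l := by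
  induction l with
  | nil => exact .nil
  | cons a l ih => cases h : P a <;> simp only [List.filter_cons, h] <;> constructor <;> exact ih

end Interleave

theorem mem_minInit {x : σ} {p : Pathway σ} (hx : x ∈ minInit p) : ∃ r ∈ p, x ∈ r.1 := by
  induction p with
  | nil => simp [minInit] at hx
  | cons r p ih =>
    rcases Multiset.mem_add.1 hx with h | h
    · exact ⟨r, List.mem_cons_self, h⟩
    · obtain ⟨s, hs, hxs⟩ := ih (Multiset.mem_of_le tsub_le_self h)
      exact ⟨s, List.mem_cons_of_mem r hs, hxs⟩

theorem applyRxn_add {S : State σ} {r : Reaction σ} (h : r.1 ≤ S) (T : State σ) :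
    applyRxn (S + T) r = applyRxn S r + T := by
  rw [applyRxn, applyRxn, ← tsub_add_eq_add_tsub h, add_right_comm]

theorem minInit_le_applyRxn {r : Reaction σ} {p : Pathway σ} {S : State σ}
    (h : minInit (r :: p) ≤ S) : minInit p ≤ applyRxn S r :=
  calc minInit p ≤ minInit p - r.2 + r.2 := le_tsub_add
    _ ≤ S - r.1 + r.2 := by grw [le_tsub_of_add_le_left h]

theorem finalFrom_add_of_interleave {q₁ q₂ p : Pathway σ} (h : Interleave q₁ q₂ p) :
    ∀ {S₁ S₂ : State σ}, minInit q₁ ≤ S₁ → minInit q₂ ≤ S₂ →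
      finalFrom (S₁ + S₂) p = finalFrom S₁ q₁ + finalFrom S₂ q₂ := by
  induction h with
  | nil => intro S₁ S₂ _ _; rfl
  | left _ ih =>
    intro S₁ S₂ h₁ h₂
    rw [finalFrom, applyRxn_add (le_trans le_self_add h₁), ih (minInit_le_applyRxn h₁) h₂]
    rfl
  | right _ ih =>
    intro S₁ S₂ h₁ h₂
    rw [finalFrom, add_comm, applyRxn_add (le_trans le_self_add h₂), add_comm,
      ih h₁ (minInit_le_applyRxn h₂)]
    rfl

theorem finalFrom_add {p : Pathway σ} {S : State σ} (h : minInit p ≤ S) (T : State σ) :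
    finalFrom (S + T) p = finalFrom S p + T := by
  simpa [finalFrom] using finalFrom_add_of_interleave (Interleave.append p []) h (zero_le : 0 ≤ T)

theorem minInit_le_of_interleave {q₁ q₂ p : Pathway σ} (h : Interleave q₁ q₂ p) :
    minInit p ≤ minInit q₁ + minInit q₂ := by
  induction h with
  | nil => exact le_rfl
  | @left a l₁ l₂ l _ ih =>
    calc a.1 + (minInit l - a.2) ≤ a.1 + (minInit l₁ + minInit l₂ - a.2) := by grw [ih]
      _ ≤ a.1 + (minInit l₁ - a.2 + minInit l₂) := by grw [add_tsub_le_tsub_add]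
      _ = a.1 + (minInit l₁ - a.2) + minInit l₂ := (add_assoc _ _ _).symm
  | @right a l₁ l₂ l _ ih =>
    calc a.1 + (minInit l - a.2) ≤ a.1 + (minInit l₁ + minInit l₂ - a.2) := by grw [ih]
      _ ≤ a.1 + (minInit l₁ + (minInit l₂ - a.2)) := by grw [add_tsub_le_assoc]
      _ = minInit l₁ + (a.1 + (minInit l₂ - a.2)) := add_left_comm _ _ _

theorem finalState_add_eq_of_interleave {q₁ q₂ p : Pathway σ} (h : Interleave q₁ q₂ p) :
    finalState p + (minInit q₁ + minInit q₂ - minInit p) =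
      finalState q₁ + finalState q₂ := by
  rw [finalState, ← finalFrom_add le_rfl, add_tsub_cancel_of_le (minInit_le_of_interleave h)]
  exact finalFrom_add_of_interleave h le_rfl le_rfl

theorem count_minInit_of_interleave {q₁ q₂ p : Pathway σ} (h : Interleave q₁ q₂ p) {x : σ}
    (hx : ∀ r ∈ q₂, x ∉ r.1 + r.2) :
    (minInit p).count x = (minInit q₁).count x := by
  induction h with
  | nil => rfl
  | left _ ih => simp only [minInit, Multiset.count_add, Multiset.count_sub, ih hx]
  | @right a _ _ _ _ ih =>
    have ha : x ∉ a.1 ∧ x ∉ a.2 := by simpa using hx a List.mem_cons_self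
    simp [minInit, Multiset.count_eq_zero.2 ha.1, Multiset.count_eq_zero.2 ha.2,
      ih fun r hr => hx r (List.mem_cons_of_mem a hr)]

theorem NoSharedIntermediates.symm {σ : Type} {fm : σ → Bool} {C C' : Finset (Reaction σ)}
    (h : NoSharedIntermediates fm C C') : NoSharedIntermediates fm C' C :=
  fun r' hr' r hr x hx' hx => h r hr r' hr' x hx hx'

theorem semiformal_of_interleave {fm : σ → Bool} {C C' : Finset (Reaction σ)}
    {q₁ q₂ p : Pathway σ} (h : Interleave q₁ q₂ p) (hp : Semiformal fm p)
    (hdisj : NoSharedIntermediates fm C C') (hq₁ : PathwayOf C q₁) (hq₂ : PathwayOf C' q₂) :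
    Semiformal fm q₁ := by
  intro x hx
  by_contra hfx
  obtain ⟨r₁, hr₁, hxr₁⟩ := mem_minInit hx
  have hx₂ : ∀ r₂ ∈ q₂, x ∉ r₂.1 + r₂.2 := fun r₂ hr₂ hxr₂ =>
    hfx (hdisj r₁ (hq₁ r₁ hr₁) r₂ (hq₂ r₂ hr₂) x (Multiset.mem_add.2 (.inl hxr₁)) hxr₂)
  rw [← Multiset.count_pos, ← count_minInit_of_interleave h hx₂, Multiset.count_pos] at hx
  exact hfx (hp x hx)

theorem FormalState.mono {σ : Type} {fm : σ → Bool} {S T : State σ} (hT : FormalState fm T)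
    (h : S ≤ T) : FormalState fm S :=
  fun x hx => hT x (Multiset.mem_of_le h hx)

theorem formalState_add {σ : Type} {fm : σ → Bool} {S T : State σ} :
    FormalState fm (S + T) ↔ FormalState fm S ∧ FormalState fm T := by
  simp only [FormalState, Multiset.mem_add, or_imp, forall_and]

theorem formalPart_add {σ : Type} (fm : σ → Bool) (S T : State σ) :
    formalPart fm (S + T) = formalPart fm S + formalPart fm T :=
  Multiset.filter_add _ _ _

theorem formalPart_eq_zero_iff {σ : Type} {fm : σ → Bool} {S : State σ} :
    formalPart fm S = 0 ↔ ∀ x ∈ S, fm x = false := by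
  simp [formalPart, Multiset.filter_eq_nil]

theorem le_of_le_add_formal {fm : σ → Bool} {N S D : State σ} (hN : formalPart fm N = 0)
    (hD : FormalState fm D) (h : N ≤ S + D) : N ≤ S := by
  rw [Multiset.le_iff_count] at h ⊢
  intro x
  cases hx : fm x
  · have hxD : x ∉ D := fun hxD => by simpa [hx] using hD x hxD
    simpa [Multiset.count_eq_zero.2 hxD] using h x
  · have hxN : x ∉ N := fun hxN => by simpa [hx] using formalPart_eq_zero_iff.1 hN x hxN
    simp [Multiset.count_eq_zero.2 hxN]

namespace ClosingPathway

variable {fm : σ → Bool} {C : Finset (Reaction σ)} {p q : Pathway σ}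

theorem formalPart_minInit (h : ClosingPathway fm C p q) : formalPart fm (minInit q) = 0 := by
  refine formalPart_eq_zero_iff.2 fun x hx => ?_
  obtain ⟨r, hr, hxr⟩ := mem_minInit hx
  exact formalPart_eq_zero_iff.1 (h.2.2.1 r hr) x hxr

theorem finalFrom_eq (h : ClosingPathway fm C p q) :
    finalFrom (finalState p) q = finalFrom (minInit q) q + (finalState p - minInit q) := by
  conv_lhs => rw [← add_tsub_cancel_of_le h.2.1]
  exact finalFrom_add le_rfl _

theorem formalState_finalFrom_minInit (h : ClosingPathway fm C p q) :
    FormalState fm (finalFrom (minInit q) q) :=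
  (formalState_add.1 (h.finalFrom_eq ▸ h.2.2.2)).1

theorem formalState_tsub (h : ClosingPathway fm C p q) :
    FormalState fm (finalState p - minInit q) :=
  (formalState_add.1 (h.finalFrom_eq ▸ h.2.2.2)).2

theorem append {C' : Finset (Reaction σ)} {p₁ p₂ q' : Pathway σ}
    (h : ClosingPathway fm C p₁ q) (h' : ClosingPathway fm C' p₂ q') {D : State σ}
    (hD : FormalState fm D) (hsum : finalState p + D = finalState p₁ + finalState p₂) :
    ClosingPathway fm (C ∪ C') p (q ++ q') := by
  set M := minInit q
  set M' := minInit q'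
  have hMM' : M + M' ≤ finalState p := by
    refine le_of_le_add_formal ?_ hD (hsum ▸ add_le_add h.2.1 h'.2.1)
    rw [formalPart_add, h.formalPart_minInit, h'.formalPart_minInit, add_zero]
  have hrest : finalState p - (M + M') ≤ (finalState p₁ - M) + (finalState p₂ - M') :=
    calc finalState p - (M + M') ≤ finalState p + D - (M + M') :=
          tsub_le_tsub_right le_self_add _
      _ = finalState p₁ + finalState p₂ - (M + M') := by rw [hsum]
      _ ≤ (finalState p₁ - M) + (finalState p₂ - M') := add_tsub_add_le_tsub_add_tsub
  have hfinal : finalFrom (finalState p) (q ++ q') =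
      finalFrom M q + (finalFrom M' q' + (finalState p - (M + M'))) := by
    conv_lhs => rw [← add_tsub_cancel_of_le hMM', add_assoc]
    rw [finalFrom_add_of_interleave (Interleave.append q q') le_rfl le_self_add,
      finalFrom_add le_rfl]
  refine ⟨?_, ?_, ?_, ?_⟩
  · intro r hr
    rcases List.mem_append.1 hr with hr | hr
    · exact Finset.mem_union_left _ (h.1 r hr)
    · exact Finset.mem_union_right _ (h'.1 r hr)
  · exact (minInit_le_of_interleave (Interleave.append q q')).trans hMM'
  · intro r hr
    rcases List.mem_append.1 hr with hr | hr
    · exact h.2.2.1 r hr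
    · exact h'.2.2.1 r hr
  · rw [hfinal, formalState_add, formalState_add]
    exact ⟨h.formalState_finalFrom_minInit, h'.formalState_finalFrom_minInit,
      (formalState_add.2 ⟨h.formalState_tsub, h'.formalState_tsub⟩).mono hrest⟩

end ClosingPathway

theorem union_stronglyTidy_general {σ : Type} [DecidableEq σ] (fm : σ → Bool)
    (C C' : Finset (Reaction σ))
    (hdisj : NoSharedIntermediates fm C C')
    (ht : StronglyTidy fm C) (ht' : StronglyTidy fm C') :
    StronglyTidy fm (C ∪ C') := by
  intro p hp hsemi
  set q₁ := p.filter (fun r => decide (r ∈ C))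
  set q₂ := p.filter (fun r => !decide (r ∈ C))
  have hsplit : Interleave q₁ q₂ p := Interleave.filter_not _ p
  have hq₁ : PathwayOf C q₁ := fun r hr => by simpa using (List.mem_filter.1 hr).2
  have hq₂ : PathwayOf C' q₂ := fun r hr => by
    obtain ⟨hrp, hrC⟩ := List.mem_filter.1 hr
    exact (Finset.mem_union.1 (hp r hrp)).resolve_left (by simpa using hrC)
  have hsemi₁ : Semiformal fm q₁ := semiformal_of_interleave hsplit hsemi hdisj hq₁ hq₂
  have hsemi₂ : Semiformal fm q₂ :=
    semiformal_of_interleave hsplit.symm hsemi hdisj.symm hq₂ hq₁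
  obtain ⟨q, hq⟩ := ht q₁ hq₁ hsemi₁
  obtain ⟨q', hq'⟩ := ht' q₂ hq₂ hsemi₂
  refine ⟨q ++ q', hq.append hq' ?_ (finalState_add_eq_of_interleave hsplit)⟩
  exact (formalState_add.2 ⟨hsemi₁, hsemi₂⟩).mono tsub_le_self

/-- The union of two strongly tidy CRNs sharing no intermediate species is strongly tidy. -/
theorem union_stronglyTidy {σ : Type} [DecidableEq σ] (fm : σ → Bool)
    (C C' : Finset (Reaction σ))
    (hC : NontrivialRxns C) (hC' : NontrivialRxns C')
    (hdisj : NoSharedIntermediates fm C C')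
    (ht : StronglyTidy fm C) (ht' : StronglyTidy fm C') :
    StronglyTidy fm (C ∪ C') :=
  union_stronglyTidy_general fm C C' hdisj ht ht'

end CRNVerif
end
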